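/- arXiv:1310.2424 — 2 statements merged into one kernel-verified Lean document; each statement's English description precedes it below -/
import Mathlib

section
/- Let G be a finite connected multigraph with non-trivial vertex partition Π, and T_τ a trans-block ordered spanning tree of G. Then for every u ∈ [0,1]^{|V|−1}, the contact matrix X^{Π,T_τ}(u) with entries X_{v,v'}(u) = ∏_{i(v,v') < k ≤ j(v,v')} u_k (and diagonal entries 1) is symmetric positive semidefinite. -/
/-!
Write `Π_k` for the partition after `k` contractions. Because every contracted edge is
trans-block, a pair `v ≠ v'` is separated by `Π_k` exactly for `i(v,v') ≤ k < j(v,v')`: the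
pair leaves its common block at step `i` and stays separated until it is merged at step `j`.
Hence `X(u)` is the entrywise product over `k` of the matrices `u_k J + (1 - u_k) 1_{Π_k}`,
where `J` is the all-ones matrix and `1_{Π_k}` the block indicator of `Π_k`. Both are Gram
matrices, so each factor is positive semidefinite, and so is their Hadamard product by the
Schur product theorem.
-/

open scoped Classical
open MeasureTheory

/-- A multigraph on vertex type `V` with edge type `E`: each edge has an
unordered pair of endpoints (self-loops and multiple edges allowed). -/
structure Multigraph (V E : Type) where
  ends : E → Sym2 V

namespace Multigraph

variable {V E : Type}

/-- Two vertices are connected using only edges in the subset `S`. -/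
def Connects (G : Multigraph V E) (S : Finset E) (v w : V) : Prop :=
  Relation.ReflTransGen (fun a b => ∃ e ∈ S, G.ends e = s(a, b)) v w

/-- The multigraph is connected. -/
def IsConnected (G : Multigraph V E) [Fintype E] : Prop :=
  ∀ v w : V, G.Connects Finset.univ v w

/-- A spanning tree: a spanning connected edge subset with `|V| - 1` edges. -/
def IsSpanningTree (G : Multigraph V E) [Fintype V] [Fintype E] (T : Finset E) : Prop :=
  (∀ v w : V, G.Connects T v w) ∧ T.card = Fintype.card V - 1

/-- Kruskal's greedy algorithm: process the edges in increasing order of the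
Hepp sector `σ`, inserting an edge iff it does not create a cycle (i.e. iff
its endpoints are not yet connected by the edges selected so far). -/
noncomputable def kruskal (G : Multigraph V E) [Fintype E]
    (σ : E ≃ Fin (Fintype.card E)) : Finset E :=
  ((List.finRange (Fintype.card E)).map σ.symm).foldl
    (fun S e => if ∀ a b, G.ends e = s(a, b) → ¬ G.Connects S a b then insert e S else S) ∅

/-- The symmetric weight `w_s(G,T)`: the fraction of Hepp sectors for which
`T` is the Kruskal leading tree. -/
noncomputable def ws (G : Multigraph V E) [Fintype V] [Fintype E] (T : Finset E) : ℚ :=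
  (Fintype.card {σ : E ≃ Fin (Fintype.card E) // G.kruskal σ = T} : ℚ) /
    (Nat.factorial (Fintype.card E) : ℚ)

/-- Updating the merge relation (which vertices have been identified) after
contracting the edge `e`: the equivalence closure of `M` together with the
pair of endpoints of `e`. -/
def mergeStep (G : Multigraph V E) (M : V → V → Prop) (e : E) : V → V → Prop :=
  Relation.EqvGen (fun a b => M a b ∨ G.ends e = s(a, b))

/-- Updating the block (partition) relation after contracting the trans-block
edge `e`: the new merged vertex forms a singleton block, the endpoints of `e`
are removed from their old blocks, and all other blocks are unchanged. -/
def blockStep (G : Multigraph V E) (M B : V → V → Prop) (e : E) : V → V → Prop :=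
  fun x y => ∀ a b, G.ends e = s(a, b) →
    ((G.mergeStep M e x a ∧ G.mergeStep M e y a) ∨
      (B x y ∧ ¬ G.mergeStep M e x a ∧ ¬ G.mergeStep M e y a))

/-- One contraction step on the pair (merge relation, block relation). -/
def stepPair (G : Multigraph V E) (s : (V → V → Prop) × (V → V → Prop)) (e : E) :
    (V → V → Prop) × (V → V → Prop) :=
  (G.mergeStep s.1 e, G.blockStep s.1 s.2 e)

/-- The state (merge relation, block relation) after contracting, in order,
the edges of the list `L`, starting from the discrete merge relation `Eq` and
initial block (partition) relation `B0`. -/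
def state (G : Multigraph V E) (B0 : V → V → Prop) (L : List E) :
    (V → V → Prop) × (V → V → Prop) :=
  L.foldl G.stepPair (Eq, B0)

/-- An edge is trans-block for the block relation `B` if its endpoints lie in
distinct blocks (in particular it is not a self-loop, even after merging). -/
def TransBlock (G : Multigraph V E) (B : V → V → Prop) (e : E) : Prop :=
  ∀ a b, G.ends e = s(a, b) → ¬ B a b

/-- The ordered list of edges `L` is a trans-block ordered forest for the
initial partition `B0`: each successive edge is trans-block for the
successively contracted partition. -/
def IsTransBlockSeq (G : Multigraph V E) (B0 : V → V → Prop) (L : List E) : Prop :=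
  ∀ p (h : p < L.length), G.TransBlock (G.state B0 (L.take p)).2 (L.get ⟨p, h⟩)

/-- `k_p`: the number of trans-block edges of the `p`-th contracted graph for
the `p`-th contracted partition (already-contracted edges are self-loops of
the contracted graph, hence never trans-block). -/
noncomputable def kcount (G : Multigraph V E) [Fintype E] (B0 : V → V → Prop)
    (L : List E) (p : ℕ) : ℕ :=
  (Finset.univ.filter fun e => G.TransBlock (G.state B0 (L.take p)).2 e).card

/-- First contact index `i(v,v')`: smallest `p` such that `v, v'` lie in
different blocks of `Π_p` (with the convention `i(v,v) = -1, j(v,v) = 0`,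
realized here by taking `i(v,v) = j(v,v) = 0`, which makes the corresponding
products empty, as in the convention `X_{v,v} = 1`). -/
noncomputable def iIdx (G : Multigraph V E) (B0 : V → V → Prop) (L : List E)
    (v v' : V) : ℕ :=
  if v = v' then 0 else sInf {p | ¬ (G.state B0 (L.take p)).2 v v'}

/-- Second contact index `j(v,v')`: smallest `p` such that `v, v'` have been
merged into a single vertex of `G_p`. -/
noncomputable def jIdx (G : Multigraph V E) (B0 : V → V → Prop) (L : List E)
    (v v' : V) : ℕ :=
  sInf {p | (G.state B0 (L.take p)).1 v v'}

/-- Entry of the contact matrix: `X_{v,v'}(u) = ∏_{i(v,v') < k ≤ j(v,v')} u_k`,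
where the variable `u_k` (1 ≤ k ≤ |V|-1) is represented by `w ⟨k-1⟩`. -/
noncomputable def Xent (G : Multigraph V E) (B0 : V → V → Prop) (L : List E)
    (n : ℕ) (w : Fin n → ℝ) (v v' : V) : ℝ :=
  ∏ k : Fin n,
    if G.iIdx B0 L v v' ≤ (k : ℕ) ∧ (k : ℕ) < G.jIdx B0 L v v' then w k else 1

/-- Contact-matrix factor `X_{v(ℓ),v'(ℓ)}(u)` of a (loop) edge `ℓ`. -/
noncomputable def XentE (G : Multigraph V E) (B0 : V → V → Prop) (L : List E)
    (n : ℕ) (w : Fin n → ℝ) (e : E) : ℝ :=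
  ∏ k : Fin n,
    if (∀ a b, G.ends e = s(a, b) →
        (G.iIdx B0 L a b ≤ (k : ℕ) ∧ (k : ℕ) < G.jIdx B0 L a b)) then w k else 1

/-- Tree edge factor `Y_ℓ(u) = ∏_{i(v(ℓ),v'(ℓ)) < k < j(v(ℓ),v'(ℓ))} u_k`. -/
noncomputable def Yent (G : Multigraph V E) (B0 : V → V → Prop) (L : List E)
    (n : ℕ) (w : Fin n → ℝ) (e : E) : ℝ :=
  ∏ k : Fin n,
    if (∀ a b, G.ends e = s(a, b) →
        (G.iIdx B0 L a b ≤ (k : ℕ) ∧ (k : ℕ) + 1 < G.jIdx B0 L a b)) then w k else 1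

/-- The weight `∏_{p=0}^{|V|-2} 1/k_p` of a trans-block ordered tree, and `0`
for a non-admissible ordering. -/
noncomputable def wOrd (G : Multigraph V E) [Fintype V] [Fintype E]
    (B0 : V → V → Prop) (L : List E) : ℚ :=
  if G.IsTransBlockSeq B0 L then
    ∏ p ∈ Finset.range (Fintype.card V - 1), ((G.kcount B0 L p : ℚ))⁻¹
  else 0

/-- The partition tree weight `w^Π(G,T)`: the sum over all admissible
orderings `τ` of `T` of `∏_{p=0}^{|V|-2} 1/k_p(T_τ)`. -/
noncomputable def wPi (G : Multigraph V E) [Fintype V] [Fintype E]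
    (B0 : V → V → Prop) (T : Finset E) : ℚ :=
  ∑ τ : Fin T.card ≃ {e // e ∈ T}, G.wOrd B0 (List.ofFn fun i => ((τ i : E)))

end Multigraph

namespace Matrix

open scoped ComplexOrder

variable {n 𝕜 : Type*} [Fintype n] [RCLike 𝕜]

theorem posSemidef_of_equivalence {r : n → n → Prop} (hr : Equivalence r) :
    (of fun i j => if r i j then (1 : 𝕜) else 0).PosSemidef := by
  let s : Setoid n := ⟨r, hr⟩
  let A : Matrix n (Quotient s) 𝕜 := of fun i c => if Quotient.mk s i = c then 1 else 0
  convert posSemidef_self_mul_conjTranspose A using 1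
  ext i j
  simp [A, s, mul_apply, Quotient.eq]

theorem posSemidef_ones : (of fun _ _ : n => (1 : 𝕜)).PosSemidef := by
  simpa [vecMulVec] using posSemidef_vecMulVec_self_star (fun _ : n => (1 : 𝕜))

theorem posSemidef_ite_of_equivalence {r : n → n → Prop} (hr : Equivalence r) {a : 𝕜}
    (ha₀ : 0 ≤ a) (ha₁ : a ≤ 1) :
    (of fun i j => if r i j then 1 else a).PosSemidef := by
  have hsplit : (of fun i j => if r i j then 1 else a) =
      a • of (fun _ _ : n => (1 : 𝕜)) +
        (1 - a) • of fun i j => if r i j then (1 : 𝕜) else 0 := by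
    ext i j
    by_cases h : r i j <;> simp [h]
  rw [hsplit]
  exact (posSemidef_ones.smul ha₀).add ((posSemidef_of_equivalence hr).smul (sub_nonneg.2 ha₁))

theorem posSemidef_prod_hadamard {ι : Type*} (s : Finset ι) {A : ι → Matrix n n 𝕜}
    (hA : ∀ k ∈ s, (A k).PosSemidef) : (of fun i j => ∏ k ∈ s, A k i j).PosSemidef := by
  classical
  induction s using Finset.induction_on with
  | empty => simpa using posSemidef_ones
  | insert k s hk ih =>
    have hprod : (of fun i j => ∏ l ∈ insert k s, A l i j) =
        A k ⊙ of fun i j => ∏ l ∈ s, A l i j := by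
      ext i j
      simp [Finset.prod_insert hk]
    rw [hprod]
    exact (hA k (s.mem_insert_self k)).hadamard
      (ih fun l hl => hA l (Finset.mem_insert_of_mem hl))

end Matrix

namespace Multigraph

variable {V E : Type} {G : Multigraph V E}

section Step

theorem mergeStep_equivalence (M : V → V → Prop) (e : E) : Equivalence (G.mergeStep M e) :=
  Relation.EqvGen.is_equivalence _

variable {M B : V → V → Prop} {e : E} {a b : V}

theorem mergeStep_of_rel {x y : V} (h : M x y) : G.mergeStep M e x y :=
  Relation.EqvGen.rel _ _ (Or.inl h)

theorem mergeStep_ends (h : G.ends e = s(a, b)) : G.mergeStep M e a b :=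
  Relation.EqvGen.rel _ _ (Or.inr h)

theorem mergeStep_cases (hM : Equivalence M) (hab : G.ends e = s(a, b)) {x y : V}
    (h : G.mergeStep M e x y) : M x y ∨ (M x a ∧ M y b) ∨ (M x b ∧ M y a) := by
  have trans : ∀ {x y z : V}, M x y → M y z → M x z := hM.trans
  have symm : ∀ {x y : V}, M x y → M y x := hM.symm
  induction h with
  | rel u v huv =>
    rcases huv with h | h
    · exact Or.inl h
    · rcases Sym2.eq_iff.1 (hab ▸ h) with ⟨rfl, rfl⟩ | ⟨rfl, rfl⟩
      · exact Or.inr (Or.inl ⟨hM.refl _, hM.refl _⟩)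
      · exact Or.inr (Or.inr ⟨hM.refl _, hM.refl _⟩)
  | refl u => exact Or.inl (hM.refl u)
  | symm u v _ ih => grind
  | trans u v z _ _ ih₁ ih₂ => grind

theorem blockStep_equivalence (hB : Equivalence B) :
    Equivalence (G.blockStep M B e) := by
  constructor
  · intro x a b hab
    by_cases h : G.mergeStep M e x a
    · exact Or.inl ⟨h, h⟩
    · exact Or.inr ⟨hB.refl x, h, h⟩
  · intro x y h a b hab
    rcases h a b hab with ⟨h₁, h₂⟩ | ⟨h₁, h₂, h₃⟩
    · exact Or.inl ⟨h₂, h₁⟩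
    · exact Or.inr ⟨hB.symm h₁, h₃, h₂⟩
  · intro x y z hxy hyz a b hab
    rcases hxy a b hab with ⟨h₁, h₂⟩ | ⟨h₁, h₂, h₃⟩ <;>
      rcases hyz a b hab with ⟨g₁, g₂⟩ | ⟨g₁, g₂, g₃⟩
    · exact Or.inl ⟨h₁, g₂⟩
    · exact absurd h₂ g₂
    · exact absurd g₁ h₃
    · exact Or.inr ⟨hB.trans h₁ g₁, h₂, g₃⟩

theorem blockStep_of_mergeStep (hM : Equivalence M) (hMB : ∀ x y, M x y → B x y) {x y : V}
    (h : G.mergeStep M e x y) : G.blockStep M B e x y := by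
  intro a b hab
  have heq := mergeStep_equivalence (G := G) M e
  by_cases hxa : G.mergeStep M e x a
  · exact Or.inl ⟨hxa, heq.trans (heq.symm h) hxa⟩
  · refine Or.inr ⟨?_, hxa, fun hya => hxa (heq.trans h hya)⟩
    rcases mergeStep_cases hM hab h with h' | ⟨h', _⟩ | ⟨h', _⟩
    · exact hMB _ _ h'
    · exact absurd (mergeStep_of_rel h') hxa
    · exact absurd (heq.trans (mergeStep_of_rel h') (heq.symm (mergeStep_ends hab))) hxa

theorem rel_or_mergeStep_of_blockStep {x y : V} (h : G.blockStep M B e x y) :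
    B x y ∨ G.mergeStep M e x y := by
  induction hab : G.ends e using Sym2.ind with | _ a b => ?_
  have heq := mergeStep_equivalence (G := G) M e
  rcases h a b hab with ⟨h₁, h₂⟩ | ⟨h₁, -, -⟩
  · exact Or.inr (heq.trans h₁ (heq.symm h₂))
  · exact Or.inl h₁

end Step

/-- The merge relation of `G_p`, after contracting the first `p` edges of `L`. -/
def mergeRel (G : Multigraph V E) (B0 : V → V → Prop) (L : List E) (p : ℕ) : V → V → Prop :=
  (G.state B0 (L.take p)).1

/-- The block relation of `Π_p`, after contracting the first `p` edges of `L`. -/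
def blockRel (G : Multigraph V E) (B0 : V → V → Prop) (L : List E) (p : ℕ) : V → V → Prop :=
  (G.state B0 (L.take p)).2

variable {B0 : V → V → Prop} {L : List E}

theorem state_take_succ {p : ℕ} (h : p < L.length) :
    G.state B0 (L.take (p + 1)) = G.stepPair (G.state B0 (L.take p)) L[p] := by
  simp only [Multigraph.state, List.take_add_one, List.getElem?_eq_getElem h, List.foldl_append]
  rfl

theorem state_take_succ_of_le {p : ℕ} (h : L.length ≤ p) :
    G.state B0 (L.take (p + 1)) = G.state B0 (L.take p) := by
  rw [List.take_of_length_le h, List.take_of_length_le (by omega)]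

theorem state_invariant (hB0 : Equivalence B0) (p : ℕ) :
    Equivalence (G.mergeRel B0 L p) ∧ Equivalence (G.blockRel B0 L p) ∧
      ∀ x y, G.mergeRel B0 L p x y → G.blockRel B0 L p x y := by
  induction p with
  | zero => exact ⟨eq_equivalence, hB0, fun x _ h => h ▸ hB0.refl x⟩
  | succ p ih =>
    obtain ⟨hM, hB, hMB⟩ := ih
    by_cases hp : p < L.length
    · simp only [mergeRel, blockRel, state_take_succ hp, stepPair]
      exact ⟨mergeStep_equivalence _ _, blockStep_equivalence hB,
        fun x y => blockStep_of_mergeStep hM hMB⟩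
    · simpa only [mergeRel, blockRel, state_take_succ_of_le (not_lt.1 hp)] using ⟨hM, hB, hMB⟩

theorem blockRel_equivalence (hB0 : Equivalence B0) (p : ℕ) :
    Equivalence (G.blockRel B0 L p) :=
  (state_invariant hB0 p).2.1

theorem blockRel_of_mergeRel (hB0 : Equivalence B0) {p : ℕ} {x y : V}
    (h : G.mergeRel B0 L p x y) : G.blockRel B0 L p x y :=
  (state_invariant hB0 p).2.2 x y h

theorem mergeRel_succ {p : ℕ} {x y : V} (h : G.mergeRel B0 L p x y) :
    G.mergeRel B0 L (p + 1) x y := by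
  by_cases hp : p < L.length
  · simpa only [mergeRel, state_take_succ hp, stepPair] using mergeStep_of_rel h
  · simpa only [mergeRel, state_take_succ_of_le (not_lt.1 hp)] using h

theorem mergeRel_mono {p q : ℕ} (hpq : p ≤ q) {x y : V} (h : G.mergeRel B0 L p x y) :
    G.mergeRel B0 L q x y := by
  induction q, hpq using Nat.le_induction with
  | base => exact h
  | succ q _ ih => exact mergeRel_succ ih

theorem blockRel_or_mergeRel_of_blockRel_succ {p : ℕ} {x y : V}
    (h : G.blockRel B0 L (p + 1) x y) :
    G.blockRel B0 L p x y ∨ G.mergeRel B0 L (p + 1) x y := by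
  by_cases hp : p < L.length
  · simp only [blockRel, mergeRel, state_take_succ hp, stepPair] at h ⊢
    exact rel_or_mergeStep_of_blockStep h
  · simp only [blockRel, state_take_succ_of_le (not_lt.1 hp)] at h
    exact Or.inl h

theorem blockRel_or_mergeRel_of_le {p q : ℕ} (hqp : q ≤ p) {x y : V}
    (h : G.blockRel B0 L p x y) :
    G.blockRel B0 L q x y ∨ G.mergeRel B0 L p x y := by
  induction p, hqp using Nat.le_induction with
  | base => exact Or.inl h
  | succ p _ ih =>
    rcases blockRel_or_mergeRel_of_blockRel_succ h with h | h
    · exact (ih h).imp_right mergeRel_succ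
    · exact Or.inr h

theorem not_blockRel_of_mergeRel_succ (hB0 : Equivalence B0) (hTB : G.IsTransBlockSeq B0 L)
    {p : ℕ} {x y : V} (h₁ : ¬ G.mergeRel B0 L p x y) (h₂ : G.mergeRel B0 L (p + 1) x y) :
    ¬ G.blockRel B0 L p x y := by
  have hp : p < L.length := by
    by_contra hp
    exact h₁ (by simpa only [mergeRel, state_take_succ_of_le (not_lt.1 hp)] using h₂)
  obtain ⟨hM, hB, hMB⟩ := state_invariant (G := G) (L := L) hB0 p
  induction hab : G.ends L[p] using Sym2.ind with | _ a b => ?_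
  have hsep : ¬ G.blockRel B0 L p a b := hTB p hp a b hab
  simp only [mergeRel, state_take_succ hp, stepPair] at h₂
  intro hxy
  rcases mergeStep_cases hM hab h₂ with h | ⟨ha, hb⟩ | ⟨hb, ha⟩
  · exact h₁ h
  · exact hsep (hB.trans (hB.symm (hMB _ _ ha)) (hB.trans hxy (hMB _ _ hb)))
  · exact hsep (hB.trans (hB.symm (hMB _ _ ha)) (hB.trans (hB.symm hxy) (hMB _ _ hb)))

theorem contact_interval_iff (hB0 : Equivalence B0) (hTB : G.IsTransBlockSeq B0 L)
    (hspan : ∀ v w : V, (G.state B0 L).1 v w) (v v' : V) (p : ℕ) :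
    G.iIdx B0 L v v' ≤ p ∧ p < G.jIdx B0 L v v' ↔ ¬ G.blockRel B0 L p v v' := by
  by_cases hvv : v = v'
  · subst hvv
    have hj : G.jIdx B0 L v v = 0 := Nat.sInf_eq_zero.2 (Or.inl rfl)
    simpa [hj] using (blockRel_equivalence (G := G) (L := L) hB0 p).refl v
  have hlt : ∀ {r}, r < G.jIdx B0 L v v' → ¬ G.mergeRel B0 L r v v' := Nat.notMem_of_lt_sInf
  have hspan' : G.mergeRel B0 L L.length v v' := by
    rw [mergeRel, List.take_length]
    exact hspan v v'
  have hj : G.mergeRel B0 L (G.jIdx B0 L v v') v v' :=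
    Nat.sInf_mem (s := {r | G.mergeRel B0 L r v v'}) ⟨_, hspan'⟩
  obtain ⟨q, hq⟩ : ∃ q, G.jIdx B0 L v v' = q + 1 :=
    Nat.exists_eq_succ_of_ne_zero fun h => hvv (by rwa [h] at hj)
  have hqsep : ¬ G.blockRel B0 L q v v' :=
    not_blockRel_of_mergeRel_succ hB0 hTB (hlt (by omega)) (hq ▸ hj)
  have hi : G.iIdx B0 L v v' = sInf {r | ¬ G.blockRel B0 L r v v'} := if_neg hvv
  have hisep : ¬ G.blockRel B0 L (G.iIdx B0 L v v') v v' :=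
    hi ▸ Nat.sInf_mem (s := {r | ¬ G.blockRel B0 L r v v'}) ⟨q, hqsep⟩
  constructor
  · rintro ⟨hip, hpj⟩ hp
    rcases blockRel_or_mergeRel_of_le hip hp with h | h
    exacts [hisep h, hlt hpj h]
  · intro hp
    refine ⟨hi ▸ Nat.sInf_le hp, ?_⟩
    by_contra! hjp
    exact hp (blockRel_of_mergeRel hB0 (mergeRel_mono hjp hj))

theorem xent_eq_prod (hB0 : Equivalence B0) (hTB : G.IsTransBlockSeq B0 L)
    (hspan : ∀ v w : V, (G.state B0 L).1 v w) (n : ℕ) (w : Fin n → ℝ) (v v' : V) :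
    G.Xent B0 L n w v v' = ∏ k : Fin n, if G.blockRel B0 L k v v' then 1 else w k := by
  refine Finset.prod_congr rfl fun k _ => ?_
  simp only [contact_interval_iff hB0 hTB hspan, ite_not]

end Multigraph

theorem contact_matrix_posSemidef_general
    {V E : Type} [Fintype V]
    (G : Multigraph V E)
    (B0 : V → V → Prop) (hB0 : Equivalence B0)
    (L : List E)
    (hTB : G.IsTransBlockSeq B0 L)
    (hspan : ∀ v w : V, (G.state B0 L).1 v w)
    (w : Fin (Fintype.card V - 1) → ℝ) (hw : ∀ k, w k ∈ Set.Icc (0 : ℝ) 1) :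
    (Matrix.of fun v v' : V =>
        G.Xent B0 L (Fintype.card V - 1) w v v').PosSemidef := by
  simp_rw [Multigraph.xent_eq_prod hB0 hTB hspan]
  exact Matrix.posSemidef_prod_hadamard _ fun k _ => Matrix.posSemidef_ite_of_equivalence
    (Multigraph.blockRel_equivalence hB0 k) (hw k).1 (hw k).2

/-- for every `u ∈ [0,1]^{|V|-1}`, the contact matrix
`X^{Π,T_τ}(u)` of a trans-block ordered spanning tree `T_τ` is symmetric
positive semidefinite (its diagonal entries being `1`). -/
theorem contact_matrix_posSemidef
    {V E : Type} [Fintype V] [Fintype E] [Nonempty V] [DecidableEq V]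
    (G : Multigraph V E) (hG : G.IsConnected)
    (B0 : V → V → Prop) (hB0 : Equivalence B0)
    (hnt : ∃ v w : V, ¬ B0 v w)
    (L : List E) (hlen : L.length = Fintype.card V - 1) (hnd : L.Nodup)
    (hTB : G.IsTransBlockSeq B0 L)
    (hspan : ∀ v w : V, (G.state B0 L).1 v w)
    (w : Fin (Fintype.card V - 1) → ℝ) (hw : ∀ k, w k ∈ Set.Icc (0 : ℝ) 1) :
    (Matrix.of fun v v' : V =>
        G.Xent B0 L (Fintype.card V - 1) w v v').PosSemidef :=
  contact_matrix_posSemidef_general G B0 hB0 L hTB hspan w hw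
end

section
/- When Π is the partition of V into |V| singletons, the partition weight w^Π(G,T) coincides with the symmetric weight w_s(G,T), i.e., the fraction of total edge-orderings σ of G for which T is the Kruskal leading tree T(σ): ∑_{σ : T(σ)=T} 1/|E(G)|! = ∑_{τ orderings of T} ∏_{p=0}^{|V|−2} 1/k_p(T_τ). -/
open scoped Classical
open MeasureTheory

/-!
Group the rankings `σ` of the edges by the order `τ` in which they rank the edges of `T`. For the
singleton partition, the `p`-th contracted partition is the partition of `V` into the components
of the first `p` edges of `τ`, so `k_p` counts the edges joining two of these components. By the
cycle property, Kruskal's algorithm returns `T` and meets its edges in the order `τ` exactly when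
each `τ p` has the smallest rank among these `k_p` edges. These edge sets decrease with `p` and
`τ p` leaves them after step `p`, so exchanging ranks inside the `p`-th set shows that the
conditions are independent, the `p`-th one holding for a fraction `1 / k_p` of the rankings.
-/

open Finset

lemma mem_take_ofFn {α : Type} {n p : ℕ} {f : Fin n → α} {a : α} :
    a ∈ (List.ofFn f).take p ↔ ∃ i : Fin n, (i : ℕ) < p ∧ f i = a := by
  rw [List.mem_take_iff_getElem]
  simp only [List.length_ofFn, lt_min_iff, List.getElem_ofFn]
  exact ⟨fun ⟨j, ⟨hjp, hjn⟩, h⟩ => ⟨⟨j, hjn⟩, hjp, h⟩, fun ⟨i, hip, h⟩ => ⟨i, ⟨hip, i.2⟩, h⟩⟩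

lemma mem_take_ofFn_symm {α : Type} {n p : ℕ} {σ : α ≃ Fin n} {a : α} :
    a ∈ (List.ofFn σ.symm).take p ↔ (σ a : ℕ) < p := by
  rw [mem_take_ofFn]
  exact ⟨fun ⟨i, hi, h⟩ => by rwa [← h, σ.apply_symm_apply],
    fun h => ⟨σ a, h, σ.symm_apply_apply a⟩⟩


section Ranking

variable {α β : Type*}

lemma isMinOn_comp_iff_of_bijOn [Preorder β] {f : α → β} {π : α → α} {s : Set α}
    (hπ : Set.BijOn π s s) {a : α} : IsMinOn (f ∘ π) s a ↔ IsMinOn f s (π a) := by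
  rw [isMinOn_iff, isMinOn_iff]
  conv_rhs => rw [← hπ.image_eq]
  rw [Set.forall_mem_image]
  rfl

lemma isMinOn_swap_trans_iff [DecidableEq α] [LinearOrder β] {σ : α ≃ β} {s : Set α} {x y : α}
    (hx : x ∈ s) (hy : y ∈ s) {a : α} :
    IsMinOn ((Equiv.swap x y).trans σ) s a ↔ IsMinOn (⇑σ) s (Equiv.swap x y a) := by
  rw [Equiv.coe_trans]
  exact isMinOn_comp_iff_of_bijOn (Equiv.swap_bijOn_self (iff_of_true hx hy))

variable [DecidableEq α] [LinearOrder β]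

/-- Exchanging the ranks of `x` and `t` maps the rankings of `C` in which `x` comes first in `s`
onto those in which `t` comes first. -/
lemma card_eq_card_mul_card_filter_isMinOn {s : Finset α} {t : α} (ht : t ∈ s)
    {C : Finset (α ≃ β)} (hC : ∀ σ ∈ C, ∀ x ∈ s, ∀ y ∈ s, (Equiv.swap x y).trans σ ∈ C) :
    #C = #s * #(C.filter fun σ : α ≃ β => IsMinOn σ s t) := by
  set fiber : α → Finset (α ≃ β) := fun x => C.filter fun σ => IsMinOn σ s x
  have hunion : C = s.biUnion fiber := by
    ext σ
    simp only [fiber, mem_biUnion, mem_filter]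
    refine ⟨fun hσ => ?_, fun ⟨_, _, hσ, _⟩ => hσ⟩
    obtain ⟨x, hx, hmin⟩ := s.exists_min_image σ ⟨t, ht⟩
    exact ⟨x, hx, hσ, isMinOn_iff.2 hmin⟩
  have hdisj : (s : Set α).PairwiseDisjoint fiber := by
    intro x hx y hy hxy
    refine disjoint_filter.2 fun σ _ hσx hσy => hxy (σ.injective ?_)
    exact le_antisymm (isMinOn_iff.1 hσx y hy) (isMinOn_iff.1 hσy x hx)
  have hfiber : ∀ x ∈ s, #(fiber x) = #(fiber t) := by
    intro x hx
    have hinv : ∀ σ : α ≃ β, (Equiv.swap x t).trans ((Equiv.swap x t).trans σ) = σ := fun σ => by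
      ext z
      simp [Equiv.swap_apply_self]
    refine card_nbij' (fun σ => (Equiv.swap x t).trans σ) (fun σ => (Equiv.swap x t).trans σ)
      ?_ ?_ (fun σ _ => hinv σ) (fun σ _ => hinv σ)
    · intro σ hσ
      simp only [fiber, coe_filter] at hσ ⊢
      refine ⟨hC σ hσ.1 x hx t ht, ?_⟩
      rw [isMinOn_swap_trans_iff (mem_coe.2 hx) (mem_coe.2 ht), Equiv.swap_apply_right]
      exact hσ.2
    · intro σ hσ
      simp only [fiber, coe_filter] at hσ ⊢
      refine ⟨hC σ hσ.1 x hx t ht, ?_⟩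
      rw [isMinOn_swap_trans_iff (mem_coe.2 hx) (mem_coe.2 ht), Equiv.swap_apply_left]
      exact hσ.2
  calc #C = ∑ x ∈ s, #(fiber x) := by
        conv_lhs => rw [hunion]
        exact card_biUnion hdisj
    _ = #s * #(fiber t) := by rw [sum_congr rfl hfiber, sum_const, smul_eq_mul]

theorem card_filter_isMinOn_mul_prod [Fintype α] [Fintype β] [DecidableEq β] {n : ℕ}
    (A : Fin n → Finset α) (t : Fin n → α) (ht : ∀ p, t p ∈ A p)
    (hA : ∀ p q, p ≤ q → A q ⊆ A p) (htA : ∀ p q, p < q → t p ∉ A q) :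
    #{σ : α ≃ β | ∀ p, IsMinOn (⇑σ) (A p) (t p)} * ∏ p, #(A p) = Fintype.card (α ≃ β) := by
  set C : ℕ → Finset (α ≃ β) :=
    fun k => {σ : α ≃ β | ∀ p : Fin n, (p : ℕ) < k → IsMinOn (⇑σ) (A p) (t p)}
  suffices h : ∀ k ≤ n,
      #(C k) * ∏ p ∈ univ.filter (fun p : Fin n => (p : ℕ) < k), #(A p) = Fintype.card (α ≃ β) by
    simpa [C] using h n le_rfl
  intro k
  induction k with
  | zero => simp [C]
  | succ k ih =>
    intro hk
    set q : Fin n := ⟨k, hk⟩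
    have hlt : ∀ p : Fin n, (p : ℕ) < k + 1 ↔ (p : ℕ) < k ∨ p = q := fun p => by
      simp only [q, Fin.ext_iff]
      omega
    -- Exchanging ranks inside `A q` preserves the earlier constraints: `A q ⊆ A p`, `t p ∉ A q`.
    have hstable : ∀ σ ∈ C k, ∀ x ∈ A q, ∀ y ∈ A q, (Equiv.swap x y).trans σ ∈ C k := by
      intro σ hσ x hx y hy
      simp only [C, mem_filter, mem_univ, true_and] at hσ ⊢
      intro p hp
      have hpq : p < q := Fin.lt_def.2 hp
      rw [isMinOn_swap_trans_iff (hA p q hpq.le hx) (hA p q hpq.le hy),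
        Equiv.swap_apply_of_ne_of_ne (fun h => htA p q hpq (by rwa [h]))
          (fun h => htA p q hpq (by rwa [h]))]
      exact hσ p hp
    have hnext : (C k).filter (fun σ : α ≃ β => IsMinOn σ (A q) (t q)) = C (k + 1) := by
      ext σ
      simp [C, hlt, or_imp, forall_and]
    have hprod : univ.filter (fun p : Fin n => (p : ℕ) < k + 1) =
        insert q (univ.filter fun p : Fin n => (p : ℕ) < k) := by
      ext p
      simp [hlt, or_comm]
    rw [hprod, prod_insert (by simp [q]), ← ih (Nat.le_of_succ_le hk),
      card_eq_card_mul_card_filter_isMinOn (ht q) hstable, hnext]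
    ring

end Ranking

section Sorting

lemma existsUnique_strictMono_comp_equiv {β γ : Type*} [Fintype β] [LinearOrder γ] {f : β → γ}
    (hf : Function.Injective f) {n : ℕ} (hn : Fintype.card β = n) :
    ∃! τ : Fin n ≃ β, StrictMono (f ∘ τ) := by
  let _ : LinearOrder β := LinearOrder.lift' f hf
  set τ₀ := Fintype.orderIsoFinOfCardEq β hn
  refine ⟨τ₀.toEquiv, fun p q hpq => τ₀.strictMono hpq, fun τ hτ => Equiv.ext fun p => hf ?_⟩
  have hrange : Set.range (f ∘ τ) = Set.range (f ∘ τ₀.toEquiv) := by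
    simp only [Set.range_comp, Equiv.range_eq_univ]
  exact congrFun ((hτ.range_inj fun p q hpq => τ₀.strictMono hpq).1 hrange) p

lemma card_eq_sum_card_filter_of_existsUnique {α β : Type*} [Fintype β] {s : Finset α}
    {Q : α → β → Prop} [∀ b, DecidablePred fun a => Q a b] (h : ∀ a ∈ s, ∃! b, Q a b) :
    #s = ∑ b, #(s.filter fun a => Q a b) := by
  simp only [card_filter]
  rw [sum_comm, card_eq_sum_ones]
  refine sum_congr rfl fun a ha => ?_
  obtain ⟨b, hb, huniq⟩ := h a ha
  rw [← card_filter, eq_comm, card_eq_one]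
  exact ⟨b, by ext b'; simpa using ⟨huniq b', fun h => h ▸ hb⟩⟩

end Sorting

namespace Multigraph

variable {V E : Type} {G : Multigraph V E}

section Connects

lemma exists_ends_eq (e : E) : ∃ a b, G.ends e = s(a, b) :=
  (G.ends e).ind fun a b => ⟨a, b, rfl⟩

lemma connects_symm {S : Finset E} {a b : V} (h : G.Connects S a b) : G.Connects S b a :=
  Relation.ReflTransGen.mono (fun _ _ ⟨e, he, hab⟩ => ⟨e, he, hab.trans Sym2.eq_swap⟩) _ _
    (Relation.reflTransGen_swap.2 h)

lemma connects_equivalence (S : Finset E) : Equivalence (G.Connects S) :=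
  ⟨fun _ => .refl, connects_symm, .trans⟩

lemma connects_of_ends {S : Finset E} {e : E} (he : e ∈ S) {a b : V} (hab : G.ends e = s(a, b)) :
    G.Connects S a b :=
  .single ⟨e, he, hab⟩

lemma connects_mono {S S' : Finset E} (h : S ⊆ S') {a b : V} (hab : G.Connects S a b) :
    G.Connects S' a b :=
  Relation.ReflTransGen.mono (fun _ _ ⟨e, he, hab⟩ => ⟨e, h he, hab⟩) _ _ hab

lemma connects_empty : G.Connects (∅ : Finset E) = Eq := by
  ext a b
  exact ⟨fun h => by induction h <;> simp_all, fun h => h ▸ .refl⟩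

lemma mergeStep_connects (S : Finset E) (e : E) :
    G.mergeStep (G.Connects S) e = G.Connects (insert e S) := by
  ext x y
  constructor
  · intro h
    refine ((connects_equivalence _).eqvGen_iff).1 (Relation.EqvGen.mono ?_ _ _ h)
    rintro a b (hab | hab)
    · exact connects_mono (subset_insert e S) hab
    · exact connects_of_ends (mem_insert_self e S) hab
  · intro h
    induction h with
    | refl => exact .refl _
    | tail _ hstep ih =>
      obtain ⟨f, hf, hends⟩ := hstep
      refine ih.trans _ _ _ (.rel _ _ ?_)
      rcases mem_insert.1 hf with rfl | hf
      · exact .inr hends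
      · exact .inl (connects_of_ends hf hends)

lemma connects_of_connects_insert {S : Finset E} {e : E} {a b x y : V}
    (hab : G.ends e = s(a, b)) (hxy : G.Connects (insert e S) x y)
    (hxa : ¬ G.Connects (insert e S) x a) : G.Connects S x y := by
  have hba : G.Connects (insert e S) b a :=
    connects_of_ends (mem_insert_self e S) (hab.trans Sym2.eq_swap)
  induction hxy with
  | refl => exact .refl
  | @tail w z hxw hstep ih =>
    obtain ⟨f, hf, hends⟩ := hstep
    rcases mem_insert.1 hf with rfl | hf
    · exfalso
      rw [hab, Sym2.eq_iff] at hends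
      rcases hends with ⟨rfl, rfl⟩ | ⟨rfl, rfl⟩
      · exact hxa hxw
      · exact hxa (hxw.trans hba)
    · exact ih.tail ⟨f, hf, hends⟩

lemma blockStep_connects (S : Finset E) (e : E) :
    G.blockStep (G.Connects S) (G.Connects S) e = G.Connects (insert e S) := by
  have hC := connects_equivalence (G := G) (insert e S)
  ext x y
  simp only [blockStep, mergeStep_connects]
  constructor
  · intro h
    obtain ⟨a, b, hab⟩ := exists_ends_eq e
    rcases h a b hab with ⟨hxa, hya⟩ | ⟨hxy, -, -⟩
    · exact hC.trans hxa (hC.symm hya)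
    · exact connects_mono (subset_insert e S) hxy
  · intro hxy a b hab
    by_cases hxa : G.Connects (insert e S) x a
    · exact .inl ⟨hxa, hC.trans (hC.symm hxy) hxa⟩
    · exact .inr ⟨connects_of_connects_insert hab hxy hxa, hxa, fun hya => hxa (hC.trans hxy hya)⟩

lemma state_eq_connects (L : List E) :
    G.state Eq L = (G.Connects L.toFinset, G.Connects L.toFinset) := by
  suffices h : ∀ S : Finset E, L.foldl G.stepPair (G.Connects S, G.Connects S) =
      (G.Connects (S ∪ L.toFinset), G.Connects (S ∪ L.toFinset)) by
    simpa [state, connects_empty] using h ∅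
  induction L with
  | nil => simp
  | cons e L ih =>
    intro S
    rw [List.foldl_cons, stepPair, mergeStep_connects, blockStep_connects, ih,
      List.toFinset_cons, insert_union, union_insert]

end Connects

section Crossing

variable [Fintype E]

variable (G) in
noncomputable def crossing (S : Finset E) : Finset E :=
  univ.filter (G.TransBlock (G.Connects S))

lemma mem_crossing {S : Finset E} {e : E} :
    e ∈ G.crossing S ↔ ∀ a b, G.ends e = s(a, b) → ¬ G.Connects S a b := by
  simp [crossing, TransBlock]

lemma notMem_crossing {S : Finset E} {e : E} :
    e ∉ G.crossing S ↔ ∃ a b, G.ends e = s(a, b) ∧ G.Connects S a b := by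
  simp [mem_crossing]

lemma crossing_anti {S S' : Finset E} (h : S ⊆ S') : G.crossing S' ⊆ G.crossing S :=
  fun _ he => mem_crossing.2 fun a b hab hS => mem_crossing.1 he a b hab (connects_mono h hS)

lemma notMem_crossing_of_mem {S : Finset E} {e : E} (he : e ∈ S) : e ∉ G.crossing S := by
  obtain ⟨a, b, hab⟩ := G.exists_ends_eq e
  exact notMem_crossing.2 ⟨a, b, hab, connects_of_ends he hab⟩

lemma connects_insert_of_notMem_crossing {S : Finset E} {e : E} (he : e ∉ G.crossing S) :
    G.Connects (insert e S) = G.Connects S := by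
  obtain ⟨a, b, hab, hS⟩ := notMem_crossing.1 he
  ext x y
  refine ⟨fun h => ?_, connects_mono (subset_insert e S)⟩
  induction h with
  | refl => exact .refl
  | tail _ hstep ih =>
    obtain ⟨f, hf, hends⟩ := hstep
    rcases mem_insert.1 hf with rfl | hf
    · rw [hab, Sym2.eq_iff] at hends
      rcases hends with ⟨rfl, rfl⟩ | ⟨rfl, rfl⟩
      · exact ih.trans hS
      · exact ih.trans (connects_symm hS)
    · exact ih.tail ⟨f, hf, hends⟩

end Crossing

section SpanningTree

lemma connects_eq_reachable (S : Finset E) :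
    G.Connects S = (SimpleGraph.fromEdgeSet (G.ends '' S)).Reachable := by
  rw [SimpleGraph.reachable_fromEdgeSet_eq_reflTransGen_toRel]
  rfl

variable [Fintype V] [Fintype E]

lemma card_le_card_add_one_of_connects [Nonempty V] {S : Finset E}
    (h : ∀ v w, G.Connects S v w) : Fintype.card V ≤ #S + 1 := by
  set H := SimpleGraph.fromEdgeSet (G.ends '' S)
  have hH : H.Connected := ⟨fun v w => by rw [← connects_eq_reachable]; exact h v w⟩
  have hedges : Nat.card H.edgeSet ≤ #S := calc
    Nat.card H.edgeSet ≤ Nat.card (G.ends '' S) :=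
      Nat.card_mono (Set.toFinite _) (by simp [H, SimpleGraph.edgeSet_fromEdgeSet])
    _ ≤ #S := by
      rw [Nat.card_coe_set_eq, ← Set.ncard_coe_finset S]
      exact Set.ncard_image_le S.finite_toSet
  have := hH.card_vert_le_card_edgeSet_add_one
  rw [Nat.card_eq_fintype_card] at this
  omega

/-- Otherwise `T.erase e` would connect all of `V` with only `|V| - 2` edges. -/
lemma IsSpanningTree.mem_crossing_of_subset_erase {T S : Finset E} {e : E}
    (hT : G.IsSpanningTree T) (he : e ∈ T) (hS : S ⊆ T.erase e) : e ∈ G.crossing S := by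
  refine mem_crossing.2 fun a b hab hab' => ?_
  have hloop : e ∉ G.crossing (T.erase e) := notMem_crossing.2 ⟨a, b, hab, connects_mono hS hab'⟩
  have hconn : ∀ v w, G.Connects (T.erase e) v w := fun v w => by
    rw [← connects_insert_of_notMem_crossing hloop, insert_erase he]
    exact hT.1 v w
  have : Nonempty V := ⟨a⟩
  have hcard := card_le_card_add_one_of_connects hconn
  rw [card_erase_of_mem he] at hcard
  have : 0 < #T := card_pos.2 ⟨e, he⟩
  have := hT.2
  omega

lemma IsSpanningTree.crossing_eq_empty {T : Finset E} (hT : G.IsSpanningTree T) :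
    G.crossing T = ∅ :=
  eq_empty_of_forall_notMem fun e => by
    obtain ⟨a, b, hab⟩ := G.exists_ends_eq e
    exact notMem_crossing.2 ⟨a, b, hab, hT.1 a b⟩

end SpanningTree

section Kruskal

variable (G) in
noncomputable def kruskalStep (S : Finset E) (e : E) : Finset E :=
  if ∀ a b, G.ends e = s(a, b) → ¬ G.Connects S a b then insert e S else S

lemma subset_kruskalStep (S : Finset E) (e : E) : S ⊆ G.kruskalStep S e := by
  unfold kruskalStep
  split_ifs
  exacts [subset_insert e S, subset_rfl]

lemma kruskalStep_subset (S : Finset E) (e : E) : G.kruskalStep S e ⊆ insert e S := by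
  unfold kruskalStep
  split_ifs
  exacts [subset_rfl, subset_insert e S]

lemma subset_foldl_kruskalStep (L : List E) (S : Finset E) : S ⊆ L.foldl G.kruskalStep S := by
  induction L generalizing S with
  | nil => exact subset_rfl
  | cons e L ih => exact (subset_kruskalStep S e).trans (ih _)

lemma foldl_kruskalStep_subset (L : List E) (S : Finset E) :
    L.foldl G.kruskalStep S ⊆ S ∪ L.toFinset := by
  induction L generalizing S with
  | nil => simp
  | cons e L ih =>
    refine (ih _).trans (union_subset_union (kruskalStep_subset S e) subset_rfl) |>.trans ?_
    rw [List.toFinset_cons, insert_union, union_insert]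

variable [Fintype E]

lemma kruskalStep_of_mem_crossing {S : Finset E} {e : E} (he : e ∈ G.crossing S) :
    G.kruskalStep S e = insert e S :=
  if_pos (mem_crossing.1 he)

lemma kruskalStep_of_notMem_crossing {S : Finset E} {e : E} (he : e ∉ G.crossing S) :
    G.kruskalStep S e = S :=
  if_neg (mt mem_crossing.2 he)

lemma kruskal_eq_foldl (σ : E ≃ Fin (Fintype.card E)) :
    G.kruskal σ = (List.ofFn σ.symm).foldl G.kruskalStep ∅ := by
  rw [List.ofFn_eq_map]
  rfl

/-- Kruskal's algorithm never removes an edge, and selects an edge only when processing it. -/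
lemma foldl_take_kruskalStep (σ : E ≃ Fin (Fintype.card E)) (j : ℕ) :
    ((List.ofFn σ.symm).take j).foldl G.kruskalStep ∅ = {e ∈ G.kruskal σ | (σ e : ℕ) < j} := by
  set L := List.ofFn σ.symm
  have hsplit :
      G.kruskal σ = (L.drop j).foldl G.kruskalStep ((L.take j).foldl G.kruskalStep ∅) := by
    rw [kruskal_eq_foldl, ← List.foldl_append, List.take_append_drop]
  ext e
  rw [mem_filter]
  constructor
  · intro he
    refine ⟨hsplit ▸ subset_foldl_kruskalStep _ _ he, mem_take_ofFn_symm.1 ?_⟩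
    simpa using foldl_kruskalStep_subset _ _ he
  · rintro ⟨he, hj⟩
    rw [hsplit] at he
    refine (mem_union.1 (foldl_kruskalStep_subset _ _ he)).resolve_right fun hdrop => ?_
    exact List.disjoint_take_drop (List.nodup_ofFn.2 σ.symm.injective) le_rfl
      (mem_take_ofFn_symm.2 hj) (List.mem_toFinset.1 hdrop)

variable [Fintype V]

lemma kruskalStep_filter_lt {T : Finset E} (hT : G.IsSpanningTree T)
    {σ : E ≃ Fin (Fintype.card E)} (hcycle : ∀ e ∉ T, e ∉ G.crossing {f ∈ T | σ f < σ e})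
    {j : ℕ} (hj : j < Fintype.card E) :
    G.kruskalStep {f ∈ T | (σ f : ℕ) < j} (σ.symm ⟨j, hj⟩) = {f ∈ T | (σ f : ℕ) < j + 1} := by
  set e := σ.symm ⟨j, hj⟩
  have hσe : ∀ f, (σ f : ℕ) = j ↔ f = e := fun f => by
    rw [Equiv.eq_symm_apply, Fin.ext_iff]
  by_cases he : e ∈ T
  · have hsub : {f ∈ T | (σ f : ℕ) < j} ⊆ T.erase e := fun f hf => by
      rw [mem_filter] at hf
      exact mem_erase.2 ⟨fun h => by simp [h, e] at hf, hf.1⟩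
    rw [kruskalStep_of_mem_crossing (hT.mem_crossing_of_subset_erase he hsub)]
    ext f
    simp only [mem_insert, mem_filter, Nat.lt_succ_iff_lt_or_eq, hσe]
    grind
  · have hlt : {f ∈ T | σ f < σ e} = {f ∈ T | (σ f : ℕ) < j} := by
      simp [e, Fin.lt_def]
    rw [kruskalStep_of_notMem_crossing (hlt ▸ hcycle e he)]
    ext f
    simp only [mem_filter, Nat.lt_succ_iff_lt_or_eq, hσe]
    grind

/-- The cycle property of minimum spanning trees. -/
theorem kruskal_eq_iff {T : Finset E} (hT : G.IsSpanningTree T) (σ : E ≃ Fin (Fintype.card E)) :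
    G.kruskal σ = T ↔ ∀ e ∉ T, e ∉ G.crossing {f ∈ T | σ f < σ e} := by
  constructor
  · rintro hk e heT hcross
    have hprefix := foldl_take_kruskalStep (G := G) σ (σ e)
    simp only [hk, ← Fin.lt_def] at hprefix
    have hdrop : (List.ofFn σ.symm).drop (σ e) = e :: (List.ofFn σ.symm).drop (σ e + 1) := by
      rw [List.drop_eq_getElem_cons (by simp)]
      simp
    have hmem : e ∈ G.kruskal σ := by
      rw [kruskal_eq_foldl, ← List.take_append_drop (σ e : ℕ) (List.ofFn σ.symm),
        List.foldl_append, hprefix, hdrop, List.foldl_cons, kruskalStep_of_mem_crossing hcross]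
      exact subset_foldl_kruskalStep _ _ (mem_insert_self e _)
    exact heT (hk ▸ hmem)
  · intro hcycle
    have hprefix : ∀ j ≤ Fintype.card E,
        ((List.ofFn σ.symm).take j).foldl G.kruskalStep ∅ = {f ∈ T | (σ f : ℕ) < j} := by
      intro j
      induction j with
      | zero => simp
      | succ j ih =>
        intro hj
        rw [List.take_succ_eq_append_getElem (by simpa using hj), List.foldl_append,
          ih (Nat.le_of_succ_le hj)]
        simpa using kruskalStep_filter_lt hT hcycle hj
    have := hprefix _ le_rfl
    rw [List.take_of_length_le (by simp)] at this
    rw [kruskal_eq_foldl, this]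
    exact filter_true_of_mem fun f _ => (σ f).2

end Kruskal

variable {T : Finset E} {n : ℕ}

section Orderings

noncomputable def orderedPrefix (τ : Fin n ≃ {e // e ∈ T}) (p : ℕ) : Finset E :=
  ((List.ofFn fun i => (τ i : E)).take p).toFinset

lemma mem_orderedPrefix {τ : Fin n ≃ {e // e ∈ T}} {p : ℕ} {e : E} :
    e ∈ orderedPrefix τ p ↔ ∃ i : Fin n, (i : ℕ) < p ∧ (τ i : E) = e := by
  rw [orderedPrefix, List.mem_toFinset, mem_take_ofFn]

lemma coe_mem_orderedPrefix_iff (τ : Fin n ≃ {e // e ∈ T}) (i : Fin n) (p : ℕ) :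
    (τ i : E) ∈ orderedPrefix τ p ↔ (i : ℕ) < p := by
  rw [mem_orderedPrefix]
  exact ⟨fun ⟨j, hj, h⟩ => τ.injective (Subtype.ext h) ▸ hj, fun h => ⟨i, h, rfl⟩⟩

lemma orderedPrefix_mono (τ : Fin n ≃ {e // e ∈ T}) {p q : ℕ} (h : p ≤ q) :
    orderedPrefix τ p ⊆ orderedPrefix τ q := fun e he => by
  obtain ⟨i, hi, rfl⟩ := mem_orderedPrefix.1 he
  exact (coe_mem_orderedPrefix_iff τ i q).2 (hi.trans_le h)

lemma exists_coe_apply_eq (τ : Fin n ≃ {e // e ∈ T}) {e : E} (he : e ∈ T) :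
    ∃ i, (τ i : E) = e :=
  ⟨τ.symm ⟨e, he⟩, by simp⟩

variable [Fintype V] [Fintype E]

lemma IsSpanningTree.coe_mem_crossing_orderedPrefix_iff (hT : G.IsSpanningTree T)
    (τ : Fin n ≃ {e // e ∈ T}) (p i : Fin n) :
    (τ i : E) ∈ G.crossing (orderedPrefix τ p) ↔ p ≤ i := by
  refine ⟨fun h => not_lt.1 fun hip => notMem_crossing_of_mem
    ((coe_mem_orderedPrefix_iff τ i p).2 hip) h, fun hpi => ?_⟩
  refine hT.mem_crossing_of_subset_erase (τ i).2 fun e he => ?_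
  obtain ⟨j, hj, rfl⟩ := mem_orderedPrefix.1 he
  refine mem_erase.2 ⟨fun h => ?_, (τ j).2⟩
  rw [τ.injective (Subtype.ext h)] at hj
  exact absurd hpi (not_le.2 hj)

theorem IsSpanningTree.kruskal_eq_and_strictMono_iff (hT : G.IsSpanningTree T)
    (τ : Fin n ≃ {e // e ∈ T}) (σ : E ≃ Fin (Fintype.card E)) :
    G.kruskal σ = T ∧ StrictMono (fun i => σ (τ i)) ↔
      ∀ p : Fin n, IsMinOn σ (G.crossing (orderedPrefix τ p)) (τ p) := by
  have hmem := hT.coe_mem_crossing_orderedPrefix_iff τ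
  have hlt : ∀ {e} (i : Fin n), e ∉ T → σ (τ i) ≤ σ e → σ (τ i) < σ e := fun i heT h =>
    h.lt_of_ne fun h' => heT (σ.injective h' ▸ (τ i).2)
  rw [kruskal_eq_iff hT]
  constructor
  · rintro ⟨hcycle, hmono⟩ p
    refine isMinOn_iff.2 fun e he => ?_
    by_cases heT : e ∈ T
    · obtain ⟨i, rfl⟩ := exists_coe_apply_eq τ heT
      exact hmono.monotone ((hmem p i).1 he)
    · refine not_lt.1 fun hep => hcycle e heT (crossing_anti (fun f hf => ?_) he)
      obtain ⟨hfT, hfe⟩ := mem_filter.1 hf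
      obtain ⟨i, rfl⟩ := exists_coe_apply_eq τ hfT
      exact (coe_mem_orderedPrefix_iff τ i p).2 (hmono.lt_iff_lt.1 (hfe.trans hep))
  · intro hmin
    have hmono : StrictMono (fun i => σ (τ i)) :=
      Monotone.strictMono_of_injective (fun p i h => isMinOn_iff.1 (hmin p) _ ((hmem p i).2 h))
        (σ.injective.comp (Subtype.val_injective.comp τ.injective))
    refine ⟨fun e heT hcross => ?_, hmono⟩
    by_cases hlater : ∃ p, σ e < σ (τ p)
    · obtain ⟨p, hp, hfirst⟩ := (univ.filter fun p => σ e < σ (τ p)).exists_min_image id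
        (by obtain ⟨p, hp⟩ := hlater; exact ⟨p, by simpa using hp⟩)
      have hsub : orderedPrefix τ p ⊆ {f ∈ T | σ f < σ e} := fun f hf => by
        obtain ⟨i, hi, rfl⟩ := mem_orderedPrefix.1 hf
        refine mem_filter.2 ⟨(τ i).2, hlt i heT (not_lt.1 fun hi' => ?_)⟩
        exact absurd (hfirst i (by simpa using hi')) (not_le.2 hi)
      exact absurd (isMinOn_iff.1 (hmin p) e (crossing_anti hsub hcross))
        (not_le.2 (by simpa using hp))
    · simp only [not_exists, not_lt] at hlater
      have hall : {f ∈ T | σ f < σ e} = T := filter_true_of_mem fun f hf => by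
        obtain ⟨i, rfl⟩ := exists_coe_apply_eq τ hf
        exact hlt i heT (hlater i)
      rw [hall, hT.crossing_eq_empty] at hcross
      exact notMem_empty e hcross

lemma IsSpanningTree.card_kruskal_eq_mul_prod (hT : G.IsSpanningTree T)
    (τ : Fin n ≃ {e // e ∈ T}) :
    #{σ : E ≃ Fin (Fintype.card E) | G.kruskal σ = T ∧ StrictMono fun i => σ (τ i)} *
      ∏ p : Fin n, #(G.crossing (orderedPrefix τ p)) = (Fintype.card E).factorial := by
  have hmem := hT.coe_mem_crossing_orderedPrefix_iff τ
  rw [filter_congr fun σ _ => hT.kruskal_eq_and_strictMono_iff τ σ,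
    card_filter_isMinOn_mul_prod (fun p => G.crossing (orderedPrefix τ p)) (fun p => τ p)
      (fun p => (hmem p p).2 le_rfl)
      (fun p q hpq => crossing_anti (orderedPrefix_mono τ hpq))
      (fun p q hpq => mt (hmem q p).1 (not_le.2 hpq))]
  exact Fintype.card_equiv (Fintype.equivFin E)

lemma IsSpanningTree.wOrd_eq (hT : G.IsSpanningTree T) (τ : Fin #T ≃ {e // e ∈ T}) :
    G.wOrd Eq (List.ofFn fun i => (τ i : E)) =
      ∏ p : Fin #T, (#(G.crossing (orderedPrefix τ p)) : ℚ)⁻¹ := by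
  have hkcount : ∀ p, G.kcount Eq (List.ofFn fun i => (τ i : E)) p =
      #(G.crossing (orderedPrefix τ p)) := fun p => by
    rw [kcount, state_eq_connects]
    rfl
  have hseq : G.IsTransBlockSeq Eq (List.ofFn fun i => (τ i : E)) := fun p hp => by
    have hp' : p < #T := by simpa using hp
    have h := (hT.coe_mem_crossing_orderedPrefix_iff τ ⟨p, hp'⟩ ⟨p, hp'⟩).2 le_rfl
    rw [state_eq_connects]
    simpa [orderedPrefix] using (mem_filter.1 h).2
  rw [wOrd, if_pos hseq, ← hT.2, ← Fin.prod_univ_eq_prod_range]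
  simp only [hkcount]

end Orderings

end Multigraph

theorem ws_eq_wPi_singleton_partition_general
    {V E : Type} [Fintype V] [Fintype E]
    (G : Multigraph V E)
    (T : Finset E) (hT : G.IsSpanningTree T) :
    G.ws T = G.wPi (Eq : V → V → Prop) T := by
  have hsort : ∀ σ : E ≃ Fin (Fintype.card E),
      ∃! τ : Fin #T ≃ {e // e ∈ T}, StrictMono (fun i => σ (τ i)) := fun σ =>
    existsUnique_strictMono_comp_equiv (f := fun e : {e // e ∈ T} => σ e)
      (σ.injective.comp Subtype.val_injective) (Fintype.card_coe T)
  rw [Multigraph.ws, Multigraph.wPi, Fintype.card_subtype,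
    card_eq_sum_card_filter_of_existsUnique fun σ _ => hsort σ, Nat.cast_sum, sum_div]
  refine sum_congr rfl fun τ _ => ?_
  have hcount := hT.card_kruskal_eq_mul_prod τ
  have hpos : ∀ p : Fin #T, 0 < #(G.crossing (Multigraph.orderedPrefix τ p)) := fun p =>
    card_pos.2 ⟨_, (hT.coe_mem_crossing_orderedPrefix_iff τ p p).2 le_rfl⟩
  have hprod : (∏ p : Fin #T, (#(G.crossing (Multigraph.orderedPrefix τ p)) : ℚ)) ≠ 0 :=
    prod_ne_zero_iff.2 fun p _ => by exact_mod_cast (hpos p).ne'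
  rw [hT.wOrd_eq τ, filter_filter, div_eq_iff (by positivity), ← hcount,
    prod_inv_distrib]
  push_cast
  field_simp

/-- for the partition of `V` into `|V|` singletons (i.e. the
block relation is equality), the partition weight coincides with the
symmetric weight: the fraction of Hepp sectors whose Kruskal leading tree is
`T` equals `∑_{τ orderings of T} ∏_p 1/k_p(T_τ)`. -/
theorem ws_eq_wPi_singleton_partition
    {V E : Type} [Fintype V] [Fintype E] [Nonempty V]
    (G : Multigraph V E) (hG : G.IsConnected)
    (T : Finset E) (hT : G.IsSpanningTree T) :
    G.ws T = G.wPi (Eq : V → V → Prop) T :=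
  ws_eq_wPi_singleton_partition_general G T hT
end
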